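/- arXiv:2106.13779 — 2 statements merged into one kernel-verified Lean document; each statement's English description precedes it below -/
import Mathlib

section
/- For all integers g ≥ 2, the maximal measure-theoretic entropy H(g) = π²(4g-4) / ((8g-4)·arccosh(1 + 2cos(π/(4g-2)))) is strictly less than the topological entropy log(4g - 3 + √((4g-3)² - 1)). -/
/-- The real inverse hyperbolic cosine, for `x ≥ 1`. -/
noncomputable def arcosh (x : ℝ) : ℝ := Real.log (x + Real.sqrt (x ^ 2 - 1))

private lemma exp_nat_lt (n : ℕ) (hn : n ≠ 0) : Real.exp n < 2.7182818286 ^ n := by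
  rw [show Real.exp (n : ℝ) = Real.exp 1 ^ n by rw [← Real.exp_nat_mul]; norm_num]
  exact pow_lt_pow_left₀ Real.exp_one_lt_d9 (Real.exp_pos 1).le hn

private lemma log9 : (2:ℝ) < Real.log 9 := by
  rw [show (2:ℝ) = Real.log (Real.exp 2) from (Real.log_exp 2).symm]
  apply Real.log_lt_log (Real.exp_pos 2)
  have h := exp_nat_lt 2 (by norm_num)
  norm_num at h ⊢
  linarith

private lemma log17 : (12/5:ℝ) < Real.log 17 := by
  rw [show (12/5:ℝ) = Real.log (Real.exp (12/5)) from (Real.log_exp _).symm]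
  apply Real.log_lt_log (Real.exp_pos _)
  have h1 : Real.exp (12/5) ^ 5 = Real.exp 12 := by
    rw [← Real.exp_nat_mul]; norm_num
  have h2 : Real.exp 12 < 17 ^ 5 := by
    have h := exp_nat_lt 12 (by norm_num)
    norm_num at h ⊢
    linarith
  refine lt_of_pow_lt_pow_left₀ 5 (by norm_num) ?_
  rw [h1]; exact h2

private lemma log25 : (3:ℝ) < Real.log 25 := by
  rw [show (3:ℝ) = Real.log (Real.exp 3) from (Real.log_exp 3).symm]
  apply Real.log_lt_log (Real.exp_pos 3)
  have h := exp_nat_lt 3 (by norm_num)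
  norm_num at h ⊢
  linarith

private lemma log527 : (33/20:ℝ) < Real.log 5.27 := by
  rw [show (33/20:ℝ) = Real.log (Real.exp (33/20)) from (Real.log_exp _).symm]
  apply Real.log_lt_log (Real.exp_pos _)
  have h1 : Real.exp (33/20) ^ 20 = Real.exp 33 := by
    rw [← Real.exp_nat_mul]; norm_num
  have h2 : Real.exp 33 < 5.27 ^ 20 := by
    have h := exp_nat_lt 33 (by norm_num)
    calc Real.exp 33 = Real.exp (33:ℕ) := by norm_num
    _ < 2.7182818286 ^ 33 := h
    _ < 5.27 ^ 20 := by norm_num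
  refine lt_of_pow_lt_pow_left₀ 20 (by norm_num) ?_
  rw [h1]; exact h2

set_option maxHeartbeats 2000000 in
/-- For all integers `g ≥ 2`, the maximal measure-theoretic entropy
`H(g) = π²(4g-4) / ((8g-4)·arccosh(1 + 2cos(π/(4g-2))))` is strictly less than the
topological entropy `log(4g - 3 + √((4g-3)² - 1))`. -/
theorem measure_entropy_lt_top_entropy (g : ℕ) (hg : 2 ≤ g) :
    Real.pi ^ 2 * (4 * g - 4) /
      ((8 * g - 4 : ℝ) * arcosh (1 + 2 * Real.cos (Real.pi / (4 * g - 2))))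
    < Real.log ((4 * g - 3 : ℝ) + Real.sqrt ((4 * g - 3 : ℝ) ^ 2 - 1)) := by
  have hG : (2:ℝ) ≤ (g:ℝ) := by exact_mod_cast hg
  set G : ℝ := (g:ℝ) with hGdef
  clear_value G
  have hπ2 : Real.pi ^ 2 < 9.8697 := by
    nlinarith [Real.pi_lt_d6, Real.pi_pos]
  -- lower bound on the arcosh term
  have h6 : (6:ℝ) ≤ 4*G - 2 := by linarith
  have htle : Real.pi / (4*G-2) ≤ Real.pi / 6 := by
    apply div_le_div_of_nonneg_left Real.pi_pos.le (by norm_num) h6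
  have hcos : Real.cos (Real.pi/6) ≤ Real.cos (Real.pi/(4*G-2)) := by
    apply Real.cos_le_cos_of_nonneg_of_le_pi (by positivity) ?_ htle
    linarith [Real.pi_pos]
  have hsqrt3 : (1.73:ℝ) ≤ Real.sqrt 3 := by
    nlinarith [Real.sq_sqrt (show (0:ℝ) ≤ 3 by norm_num), Real.sqrt_nonneg 3]
  have hx : (2.73:ℝ) ≤ 1 + 2 * Real.cos (Real.pi/(4*G-2)) := by
    have := Real.cos_pi_div_six
    nlinarith [hcos, hsqrt3]
  set x : ℝ := 1 + 2 * Real.cos (Real.pi/(4*G-2)) with hxdef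
  clear_value x
  have hA : (33/20:ℝ) ≤ arcosh x := by
    have hx2 : (0:ℝ) ≤ x^2 - 1 := by nlinarith [hx, sq_nonneg (x - 2.73)]
    have hs : (2.54:ℝ) ≤ Real.sqrt (x^2-1) := by
      nlinarith [Real.sq_sqrt hx2, Real.sqrt_nonneg (x^2-1), hx, sq_nonneg (x - 2.73)]
    have harg : (5.27:ℝ) ≤ x + Real.sqrt (x^2-1) := by linarith
    have := Real.log_le_log (by norm_num : (0:ℝ) < 5.27) harg
    unfold arcosh
    linarith [log527]
  have hApos : (0:ℝ) < arcosh x := lt_of_lt_of_le (by norm_num) hA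
  -- RHS lower bound
  have hsq : (0:ℝ) ≤ (4*G-3)^2 - 1 := by nlinarith [hG, sq_nonneg (4*G-3-5)]
  have hsqrtR : (4*G-4) ≤ Real.sqrt ((4*G-3)^2 - 1) := by
    nlinarith [Real.sq_sqrt hsq, Real.sqrt_nonneg ((4*G-3)^2-1), hG, sq_nonneg (Real.sqrt ((4*G-3)^2-1) - (4*G-4))]
  have hRHSarg : 8*G - 7 ≤ (4*G-3) + Real.sqrt ((4*G-3)^2 - 1) := by linarith
  have hlogmono : Real.log (8*G-7) ≤ Real.log ((4*G-3) + Real.sqrt ((4*G-3)^2-1)) :=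
    Real.log_le_log (by linarith) hRHSarg
  refine lt_of_lt_of_le ?_ hlogmono
  have hden : (0:ℝ) < (8*G-4) * arcosh x := by
    apply mul_pos (by linarith) hApos
  rw [div_lt_iff₀ hden]
  -- goal : π² * (4G-4) < log (8G-7) * ((8G-4) * arcosh x)
  set L : ℝ := Real.log (8*G-7) with hLdef
  set A : ℝ := arcosh x with hAdef
  have hcase : G = 2 ∨ G = 3 ∨ (4:ℝ) ≤ G := by
    rcases Nat.lt_or_ge g 4 with h | h
    · interval_cases g
      · left; rw [hGdef]; norm_num
      · right; left; rw [hGdef]; norm_num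
    · right; right
      rw [hGdef]; exact_mod_cast h
  rcases hcase with h | h | h
  · -- G = 2 : π²·4 < L·(12·A), L = log 9 > 2, A ≥ 33/20
    have hL : (2:ℝ) < L := by
      rw [hLdef, h, show (8:ℝ)*2-7 = 9 by norm_num]; exact log9
    have hLA : (2:ℝ)*(33/20) ≤ L*A := by nlinarith
    rw [h]; nlinarith [hπ2, hLA]
  · have hL : (12/5:ℝ) < L := by
      rw [hLdef, h, show (8:ℝ)*3-7 = 17 by norm_num]; exact log17
    have hLA : (12/5:ℝ)*(33/20) ≤ L*A := by nlinarith
    rw [h]; nlinarith [hπ2, hLA]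
  · have hL : (3:ℝ) < L := by
      rw [hLdef]
      calc (3:ℝ) < Real.log 25 := log25
      _ ≤ Real.log (8*G-7) := Real.log_le_log (by norm_num) (by linarith)
    have hLA : (99/20:ℝ) ≤ L*A := by nlinarith
    have h1 : (99/20)*(8*G-4) ≤ (L*A)*(8*G-4) :=
      mul_le_mul_of_nonneg_right hLA (by linarith)
    have h2 : Real.pi^2 * (4*G-4) ≤ 9.8697 * (4*G-4) :=
      mul_le_mul_of_nonneg_right hπ2.le (by linarith)
    nlinarith [h1, h2]
end

section
/- For g = 2, the maximal measure-theoretic entropy H(2) = 4π²/(12·arccosh(1 + √3)) satisfies 1.9 < H(2) < 2, and H(2) < arccosh(5). -/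
lemma sqrt3_lb : (1.732:ℝ) < Real.sqrt 3 := by
  have := Real.sq_sqrt (by norm_num : (3:ℝ) ≥ 0)
  nlinarith [Real.sqrt_nonneg (3:ℝ)]

lemma sqrt3_ub : Real.sqrt 3 < 1.7321 := by
  have := Real.sq_sqrt (by norm_num : (3:ℝ) ≥ 0)
  nlinarith [Real.sqrt_nonneg (3:ℝ)]

lemma exp_ub : Real.exp (33/20) < 5.274 := by
  have h1 : Real.exp (33/20) ^ (20:ℕ) = Real.exp 1 ^ (33:ℕ) := by
    rw [← Real.exp_nat_mul, ← Real.exp_nat_mul]; norm_num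
  have h2 : Real.exp 1 ^ (33:ℕ) < (2.7182818286:ℝ) ^ (33:ℕ) :=
    pow_lt_pow_left₀ Real.exp_one_lt_d9 (le_of_lt (Real.exp_pos 1)) (by norm_num)
  have h3 : (2.7182818286:ℝ) ^ (33:ℕ) < (5.274:ℝ) ^ (20:ℕ) := by norm_num
  have : Real.exp (33/20) ^ (20:ℕ) < (5.274:ℝ) ^ (20:ℕ) := by
    rw [h1]; exact lt_trans h2 h3
  exact lt_of_pow_lt_pow_left₀ 20 (by norm_num) this

lemma exp_lb : (5.275:ℝ) < Real.exp (17/10) := by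
  have h1 : Real.exp (17/10) ^ (10:ℕ) = Real.exp 1 ^ (17:ℕ) := by
    rw [← Real.exp_nat_mul, ← Real.exp_nat_mul]; norm_num
  have h2 : (2.7182818283:ℝ) ^ (17:ℕ) < Real.exp 1 ^ (17:ℕ) :=
    pow_lt_pow_left₀ Real.exp_one_gt_d9 (by norm_num) (by norm_num)
  have h3 : (5.275:ℝ) ^ (10:ℕ) < (2.7182818283:ℝ) ^ (17:ℕ) := by norm_num
  have : (5.275:ℝ) ^ (10:ℕ) < Real.exp (17/10) ^ (10:ℕ) := by
    rw [h1]; exact lt_trans h3 h2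
  exact lt_of_pow_lt_pow_left₀ 10 (Real.exp_pos _).le this

lemma exp2_ub : Real.exp 2 < 9.89 := by
  have h1 : Real.exp 2 = Real.exp 1 ^ (2:ℕ) := by
    rw [← Real.exp_nat_mul]; norm_num
  have h2 : Real.exp 1 ^ (2:ℕ) < (2.7182818286:ℝ) ^ (2:ℕ) :=
    pow_lt_pow_left₀ Real.exp_one_lt_d9 (Real.exp_pos 1).le (by norm_num)
  rw [h1]; nlinarith

/-- For `g = 2`, the maximal measure-theoretic entropy `H(2) = 4π²/(12·arccosh(1+√3))`
satisfies `1.9 < H(2) < 2` and `H(2) < arccosh 5`. -/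
theorem H_two_bounds :
    1.9 < 4 * Real.pi ^ 2 / (12 * arcosh (1 + Real.sqrt 3))
    ∧ 4 * Real.pi ^ 2 / (12 * arcosh (1 + Real.sqrt 3)) < 2
    ∧ 4 * Real.pi ^ 2 / (12 * arcosh (1 + Real.sqrt 3)) < arcosh 5 := by
  have h3l := sqrt3_lb
  have h3u := sqrt3_ub
  have h3sq := Real.sq_sqrt (by norm_num : (3:ℝ) ≥ 0)
  -- rewrite inner expression
  have hinner : (1 + Real.sqrt 3) ^ 2 - 1 = 3 + 2 * Real.sqrt 3 := by nlinarith
  have hin_nonneg : (0:ℝ) ≤ 3 + 2 * Real.sqrt 3 := by nlinarith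
  have hq := Real.sq_sqrt hin_nonneg
  have hqn := Real.sqrt_nonneg (3 + 2 * Real.sqrt 3)
  have hql : (2.542:ℝ) < Real.sqrt (3 + 2 * Real.sqrt 3) := by nlinarith
  have hqu : Real.sqrt (3 + 2 * Real.sqrt 3) < 2.5425 := by nlinarith
  set s := 1 + Real.sqrt 3 + Real.sqrt (3 + 2 * Real.sqrt 3) with hs
  have hsl : (5.274:ℝ) < s := by rw [hs]; nlinarith
  have hsu : s < 5.275 := by rw [hs]; nlinarith
  have hspos : (0:ℝ) < s := by linarith
  have harc : arcosh (1 + Real.sqrt 3) = Real.log s := by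
    rw [arcosh, hinner]
  have hLl : (33/20:ℝ) < Real.log s := by
    rw [Real.lt_log_iff_exp_lt hspos]; exact lt_trans exp_ub hsl
  have hLu : Real.log s < 17/10 := by
    rw [Real.log_lt_iff_lt_exp hspos]; exact lt_trans hsu exp_lb
  have hpil := Real.pi_gt_d6
  have hpiu := Real.pi_lt_d6
  have hLpos : (0:ℝ) < 12 * Real.log s := by linarith
  rw [harc]
  refine ⟨?_, ?_, ?_⟩
  · rw [lt_div_iff₀ hLpos]; nlinarith
  · rw [div_lt_iff₀ hLpos]; nlinarith
  · -- arcosh 5 = log (5 + sqrt 24) > 2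
    have h24 : (5:ℝ) ^ 2 - 1 = 24 := by norm_num
    have h24sq := Real.sq_sqrt (by norm_num : (24:ℝ) ≥ 0)
    have h24n := Real.sqrt_nonneg (24:ℝ)
    have h24l : (4.89:ℝ) < Real.sqrt 24 := by nlinarith
    have h5pos : (0:ℝ) < 5 + Real.sqrt 24 := by linarith
    have harc5 : (2:ℝ) < arcosh 5 := by
      rw [arcosh, h24, Real.lt_log_iff_exp_lt h5pos]
      calc Real.exp 2 < 9.89 := exp2_ub
        _ < 5 + Real.sqrt 24 := by linarith
    have hH2 : 4 * Real.pi ^ 2 / (12 * Real.log s) < 2 := by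
      rw [div_lt_iff₀ hLpos]; nlinarith
    linarith
end
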